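/- arXiv:1004.1784 — 6 statements merged into one kernel-verified Lean document; each statement's English description precedes it below -/
import Mathlib

section
/- For every integer N ≥ 2 and all rational numbers x and y, one has (x − y) · ∑_{a ≥ 1, b ≥ 1, a+b ≤ N} s(N, a+b) · x^a · y^b = y · ∏_{i=0}^{N−1} (x − i) − x · ∏_{i=0}^{N−1} (y − i). (For x ≠ y this is the paper's identity ∑_{2 ≤ a+b ≤ N} s(N,a+b) x^a y^b = (y·x(x−1)⋯(x−N+1) − x·y(y−1)⋯(y−N+1))/(x − y).) -/
open Finset

/-- The signed Stirling numbers of the first kind: `s n k` is the coefficient of `X^k`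
in the descending factorial `X(X-1)⋯(X-n+1)`. -/
noncomputable def stirlingFirst (n k : ℕ) : ℤ := (descPochhammer ℤ n).coeff k

/-- Index set of pairs `(a, b)` of natural numbers with `a, b ≥ 1` and `a + b ≤ N`. -/
def pairIdx (N : ℕ) : Finset (ℕ × ℕ) :=
  (Finset.Icc 1 N ×ˢ Finset.Icc 1 N).filter fun p => p.1 + p.2 ≤ N

lemma prod_range_eq_eval (N : ℕ) (z : ℚ) :
    ∏ i ∈ Finset.range N, (z - (i : ℚ)) = (descPochhammer ℚ N).eval z := by
  induction N with
  | zero => simp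
  | succ n ih => rw [Finset.prod_range_succ, ih, descPochhammer_succ_eval]

lemma eval_eq_sum_stirling (N : ℕ) (z : ℚ) :
    (descPochhammer ℚ N).eval z
      = ∑ k ∈ Finset.range (N + 1), (stirlingFirst N k : ℚ) * z ^ k := by
  rw [Polynomial.eval_eq_sum_range' (n := N + 1)
    (by rw [descPochhammer_natDegree]; omega)]
  refine Finset.sum_congr rfl fun k _ => ?_
  congr 1
  rw [stirlingFirst, ← descPochhammer_map (Int.castRingHom ℚ) N,
    Polynomial.coeff_map]
  simp

/-- Lemma 2.3 (2.10) of the paper: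
`(x - y) ∑_{a,b ≥ 1, a+b ≤ N} s(N, a+b) x^a y^b
  = y·x(x-1)⋯(x-N+1) - x·y(y-1)⋯(y-N+1)`. -/
theorem stirling_pair_sum_identity (N : ℕ) (hN : 2 ≤ N) (x y : ℚ) :
    (x - y) * ∑ p ∈ pairIdx N, (stirlingFirst N (p.1 + p.2) : ℚ) * x ^ p.1 * y ^ p.2
      = y * ∏ i ∈ Finset.range N, (x - (i : ℚ))
        - x * ∏ i ∈ Finset.range N, (y - (i : ℚ)) := by
  have hs0 : stirlingFirst N 0 = 0 := by
    rw [stirlingFirst, Polynomial.coeff_zero_eq_eval_zero, descPochhammer_eval_zero,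
      if_neg (by omega)]
  have key : ∑ p ∈ pairIdx N, (stirlingFirst N (p.1 + p.2) : ℚ) * x ^ p.1 * y ^ p.2
      = ∑ k ∈ Finset.range (N + 1), ∑ i ∈ Finset.range (k - 1),
          (stirlingFirst N k : ℚ) * x ^ (i + 1) * y ^ (k - 1 - i) := by
    rw [Finset.sum_sigma']
    refine Finset.sum_nbij' (fun p => ⟨p.1 + p.2, p.1 - 1⟩)
      (fun q => (q.2 + 1, q.1 - 1 - q.2)) ?_ ?_ ?_ ?_ ?_
    · rintro ⟨a, b⟩ hp
      simp only [pairIdx, Finset.mem_filter, Finset.mem_product, Finset.mem_Icc] at hp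
      simp only [Finset.mem_sigma, Finset.mem_range]
      omega
    · rintro ⟨k, i⟩ hq
      simp only [Finset.mem_sigma, Finset.mem_range] at hq
      simp only [pairIdx, Finset.mem_filter, Finset.mem_product, Finset.mem_Icc]
      omega
    · rintro ⟨a, b⟩ hp
      simp only [pairIdx, Finset.mem_filter, Finset.mem_product, Finset.mem_Icc] at hp
      simp only [Prod.mk.injEq]
      constructor <;> omega
    · rintro ⟨k, i⟩ hq
      simp only [Finset.mem_sigma, Finset.mem_range] at hq
      have h1 : i + 1 + (k - 1 - i) = k := by omega
      simp only [h1, Nat.add_sub_cancel]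
    · rintro ⟨a, b⟩ hp
      simp only [pairIdx, Finset.mem_filter, Finset.mem_product, Finset.mem_Icc] at hp
      have h1 : a - 1 + 1 = a := by omega
      have h2 : a + b - 1 - (a - 1) = b := by omega
      simp only [h1, h2]
  rw [key, prod_range_eq_eval, prod_range_eq_eval, eval_eq_sum_stirling,
    eval_eq_sum_stirling, Finset.mul_sum, Finset.mul_sum, Finset.mul_sum,
    ← Finset.sum_sub_distrib]
  refine Finset.sum_congr rfl fun k _ => ?_
  rcases Nat.eq_zero_or_pos k with hk | hk
  · subst hk; simp [hs0]
  have hgeom := geom_sum₂_mul x y (k - 1)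
  have step : (x - y) * ∑ i ∈ Finset.range (k - 1),
      (stirlingFirst N k : ℚ) * x ^ (i + 1) * y ^ (k - 1 - i)
      = (stirlingFirst N k : ℚ) * (x * y) *
        ((∑ i ∈ Finset.range (k - 1), x ^ i * y ^ (k - 1 - 1 - i)) * (x - y)) := by
    rw [Finset.mul_sum, mul_assoc, Finset.sum_mul, Finset.mul_sum, Finset.mul_sum]
    refine Finset.sum_congr rfl fun i hi => ?_
    simp only [Finset.mem_range] at hi
    have h2 : k - 1 - i = (k - 1 - 1 - i) + 1 := by omega
    rw [h2, pow_succ]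
    ring
  rw [step, hgeom]
  have h3 : x ^ (k - 1) * x = x ^ k := by
    rw [← pow_succ]; congr 1; omega
  have h4 : y ^ (k - 1) * y = y ^ k := by
    rw [← pow_succ]; congr 1; omega
  calc (stirlingFirst N k : ℚ) * (x * y) * (x ^ (k - 1) - y ^ (k - 1))
      = (stirlingFirst N k : ℚ) * (y * (x ^ (k - 1) * x) - x * (y ^ (k - 1) * y)) := by ring
    _ = y * ((stirlingFirst N k : ℚ) * x ^ k) - x * ((stirlingFirst N k : ℚ) * y ^ k) := by
        rw [h3, h4]; ring
end

section
/- For all integers N ≥ 2 and 1 ≤ M ≤ N−1, one has ∑_{a ≥ 1, b ≥ 1, a+b ≤ N} s(N, a+b) · M^{a+b−1} = (−1)^{N−M−1} · M! · (N−M−1)!. -/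
open Finset

lemma descPoch_eq_nodal (N : ℕ) :
    descPochhammer ℚ N = Lagrange.nodal (range N) (fun j => (j : ℚ)) := by
  induction N with
  | zero => simp [Lagrange.nodal]
  | succ n ih =>
      rw [descPochhammer_succ_right, ih, Finset.range_add_one,
        Lagrange.nodal_insert_eq_nodal (by simp), mul_comm]
      simp [Polynomial.C_eq_natCast]

lemma prod_neg_fact (M : ℕ) : ∀ n : ℕ, ∏ j ∈ Finset.Ico (M+1) (M+1+n), ((M : ℚ) - j)
    = (-1)^n * (Nat.factorial n) := by
  intro n
  induction n with
  | zero => simp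
  | succ m ih =>
      rw [show M+1+(m+1) = (M+1+m)+1 by ring, Finset.prod_Ico_succ_top (by omega), ih,
        Nat.factorial_succ]
      push_cast
      ring

lemma prod_lt_fact (M : ℕ) : ∏ j ∈ Finset.range M, ((M : ℚ) - j) = Nat.factorial M := by
  have h : ∀ j ∈ Finset.range M, ((M : ℚ) - (M - 1 - j : ℕ)) = ((j : ℕ) + 1 : ℚ) := by
    intro j hj
    simp only [Finset.mem_range] at hj
    have : (M - 1 - j : ℕ) = M - (j+1) := by omega
    rw [this, Nat.cast_sub (by omega)]
    push_cast
    ring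
  calc ∏ j ∈ Finset.range M, ((M : ℚ) - j)
      = ∏ j ∈ Finset.range M, ((M : ℚ) - (M - 1 - j : ℕ)) := (Finset.prod_range_reflect _ _).symm
    _ = ∏ j ∈ Finset.range M, ((j : ℚ) + 1) := Finset.prod_congr rfl h
    _ = Nat.factorial M := by
        rw [← Finset.prod_range_add_one_eq_factorial M]
        push_cast
        rfl

lemma deriv_eval (N M : ℕ) (hMN : M < N) :
    Polynomial.eval (M : ℚ) (Polynomial.derivative (descPochhammer ℚ N))
      = (-1 : ℚ) ^ (N - M - 1) * (Nat.factorial M : ℚ) * (Nat.factorial (N - M - 1) : ℚ) := by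
  classical
  rw [descPoch_eq_nodal]
  have hMem : M ∈ Finset.range N := Finset.mem_range.mpr hMN
  have := Lagrange.eval_nodal_derivative_eval_node_eq (s := Finset.range N)
    (v := fun j => (j : ℚ)) hMem
  rw [this, Lagrange.eval_nodal]
  have hsplit : (Finset.range N).erase M = Finset.range M ∪ Finset.Ico (M+1) N := by
    ext j; simp [Finset.mem_erase, Finset.mem_range, Finset.mem_Ico]; omega
  have hdisj : Disjoint (Finset.range M) (Finset.Ico (M+1) N) := by
    rw [Finset.disjoint_left]; intro j hj hj'
    simp [Finset.mem_range, Finset.mem_Ico] at hj hj'; omega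
  rw [hsplit, Finset.prod_union hdisj, prod_lt_fact,
    show N = M + 1 + (N - M - 1) by omega, prod_neg_fact]
  have : M + 1 + (N - M - 1) - M - 1 = N - M - 1 := by omega
  rw [this]
  ring

lemma fiber_card (N k : ℕ) (hkN : k ≤ N) :
    ((pairIdx N).filter (fun p => p.1 + p.2 = k)).card = k - 1 := by
  have h : (pairIdx N).filter (fun p => p.1 + p.2 = k)
      = (Finset.Icc 1 (k-1)).image (fun a => (a, k - a)) := by
    ext ⟨a, b⟩
    simp only [pairIdx, Finset.mem_filter, Finset.mem_product, Finset.mem_Icc,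
      Finset.mem_image, Prod.mk.injEq]
    constructor
    · intro h
      exact ⟨a, by omega, rfl, by omega⟩
    · rintro ⟨x, hx, rfl, rfl⟩
      omega
  rw [h, Finset.card_image_of_injective _ (fun x y h => (Prod.mk.injEq _ _ _ _ ▸ h).1),
    Nat.card_Icc]
  omega


/-- Lemma 2.3 (2.11) of the paper:
`∑_{a,b ≥ 1, a+b ≤ N} s(N, a+b) M^{a+b-1} = (-1)^{N-M-1} M! (N-M-1)!`
for `1 ≤ M ≤ N-1`. -/
theorem stirling_pair_sum_eval (N M : ℕ) (hN : 2 ≤ N) (hM1 : 1 ≤ M) (hM2 : M ≤ N - 1) :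
    ∑ p ∈ pairIdx N, (stirlingFirst N (p.1 + p.2) : ℚ) * (M : ℚ) ^ (p.1 + p.2 - 1)
      = (-1 : ℚ) ^ (N - M - 1) * (Nat.factorial M : ℚ) * (Nat.factorial (N - M - 1) : ℚ) := by
  classical
  have hMN : M < N := by omega
  set P : Polynomial ℚ := descPochhammer ℚ N with hP
  have hc : ∀ k, (stirlingFirst N k : ℚ) = P.coeff k := by
    intro k
    rw [stirlingFirst, hP, ← descPochhammer_map (Int.castRingHom ℚ) N, Polynomial.coeff_map]
    simp
  -- step 1 : fiberwise sum
  have hmaps : ∀ p ∈ pairIdx N, p.1 + p.2 ∈ Finset.Icc 2 N := by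
    intro p hp
    simp only [pairIdx, Finset.mem_filter, Finset.mem_product, Finset.mem_Icc] at hp ⊢
    omega
  have step1 : ∑ p ∈ pairIdx N, (stirlingFirst N (p.1 + p.2) : ℚ) * (M : ℚ) ^ (p.1 + p.2 - 1)
      = ∑ k ∈ Finset.Icc 2 N, ((k - 1 : ℕ) : ℚ) * (P.coeff k * (M : ℚ) ^ (k - 1)) := by
    rw [← Finset.sum_fiberwise_of_maps_to hmaps]
    refine Finset.sum_congr rfl fun k hk => ?_
    have hpt : ∀ p ∈ (pairIdx N).filter (fun p => p.1 + p.2 = k),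
        (stirlingFirst N (p.1 + p.2) : ℚ) * (M : ℚ) ^ (p.1 + p.2 - 1)
          = P.coeff k * (M : ℚ) ^ (k - 1) := fun p hp => by
      rw [(Finset.mem_filter.mp hp).2, hc]
    rw [Finset.sum_congr rfl hpt, Finset.sum_const,
      fiber_card N k (Finset.mem_Icc.mp hk).2, nsmul_eq_mul]
  rw [step1]
  -- step 2 : extend to Icc 1 N
  have step2 : ∑ k ∈ Finset.Icc 2 N, ((k - 1 : ℕ) : ℚ) * (P.coeff k * (M : ℚ) ^ (k - 1))
      = ∑ k ∈ Finset.Icc 1 N, ((k - 1 : ℕ) : ℚ) * (P.coeff k * (M : ℚ) ^ (k - 1)) := by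
    have hsub : Finset.Icc 2 N ⊆ Finset.Icc 1 N := by
      intro k hk; simp only [Finset.mem_Icc] at hk ⊢; omega
    refine Finset.sum_subset hsub ?_
    intro k hk hk2
    simp only [Finset.mem_Icc] at hk hk2
    have : k = 1 := by omega
    simp [this]
  have hIcc : Finset.Icc 1 N = Finset.Ico 1 (N+1) := by rw [Finset.Ico_add_one_right_eq_Icc]
  rw [step2, hIcc, Finset.sum_Ico_eq_sum_range]
  have hdeg : P.natDegree = N := descPochhammer_natDegree ℚ N
  have hPeval : Polynomial.eval (M : ℚ) P = 0 := by
    rw [hP, descPochhammer_eval_eq_descFactorial]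
    simp [Nat.descFactorial_eq_zero_iff_lt.mpr hMN]
  have hc0 : P.coeff 0 = 0 := by
    rw [Polynomial.coeff_zero_eq_eval_zero]
    exact descPochhammer_ne_zero_eval_zero ℚ (by omega : N ≠ 0)
  -- D = 0
  have hD : ∑ j ∈ Finset.range N, P.coeff (j + 1) * (M : ℚ) ^ j = 0 := by
    have hMne : (M : ℚ) ≠ 0 := by positivity
    have h1 : Polynomial.eval (M : ℚ) P
        = ∑ k ∈ Finset.range (N + 1), P.coeff k * (M : ℚ) ^ k :=
      Polynomial.eval_eq_sum_range' (by omega) _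
    rw [Finset.sum_range_succ', hPeval] at h1
    simp only [pow_zero, mul_one, hc0, add_zero] at h1
    have h2 : (∑ j ∈ Finset.range N, P.coeff (j + 1) * (M : ℚ) ^ j) * (M : ℚ) = 0 :=
      calc (∑ j ∈ Finset.range N, P.coeff (j + 1) * (M : ℚ) ^ j) * (M : ℚ)
          = ∑ j ∈ Finset.range N, P.coeff (j + 1) * (M : ℚ) ^ (j + 1) := by
            rw [Finset.sum_mul]
            exact Finset.sum_congr rfl fun j _ => by ring
        _ = 0 := h1.symm
    exact (mul_eq_zero.mp h2).resolve_right hMne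
  -- derivative eval as sum
  have hderiv : Polynomial.eval (M : ℚ) (Polynomial.derivative P)
      = ∑ j ∈ Finset.range N, P.coeff (j + 1) * (j + 1 : ℚ) * (M : ℚ) ^ j := by
    have hne : P.natDegree ≠ 0 := by omega
    rw [Polynomial.eval_eq_sum_range' (n := N)
      (lt_of_lt_of_le (Polynomial.natDegree_derivative_lt hne) (le_of_eq hdeg)) _]
    exact Finset.sum_congr rfl fun j _ => by rw [Polynomial.coeff_derivative]
  have key : ∑ j ∈ Finset.range (N + 1 - 1), ((1 + j - 1 : ℕ) : ℚ)
        * (P.coeff (1 + j) * (M : ℚ) ^ (1 + j - 1))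
      = Polynomial.eval (M : ℚ) (Polynomial.derivative P) := by
    rw [hderiv, ← sub_zero (∑ j ∈ Finset.range N, P.coeff (j + 1) * ((j : ℚ) + 1) * (M : ℚ) ^ j),
      ← hD, ← Finset.sum_sub_distrib]
    refine Finset.sum_congr (by rw [Nat.add_sub_cancel]) fun j _ => ?_
    have h1 : 1 + j - 1 = j := by omega
    have h2 : 1 + j = j + 1 := by omega
    rw [h1, h2]
    ring
  rw [key, deriv_eval N M hMN]
end

section
/- For all integers N ≥ 2 and 1 ≤ l, j ≤ N−1 with l ≠ j, one has ∑_{a ≥ 1, b ≥ 1, a+b ≤ N} s(N, a+b) · (N−l)^{a−1} · (N−j)^b = 0. -/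
open Finset

lemma stirlingFirst_cast (n k : ℕ) :
    (stirlingFirst n k : ℚ) = (descPochhammer ℚ n).coeff k := by
  rw [stirlingFirst, ← descPochhammer_map (Int.castRingHom ℚ) n, Polynomial.coeff_map,
    eq_intCast]

lemma stirlingFirst_zero_eq (n : ℕ) (hn : n ≠ 0) : stirlingFirst n 0 = 0 := by
  rw [stirlingFirst, Polynomial.coeff_zero_eq_eval_zero,
    descPochhammer_ne_zero_eval_zero (R := ℤ) hn]

lemma descPochhammer_rat_eval_nat_zero {N m : ℕ} (hm : m < N) :
    (descPochhammer ℚ N).eval (m : ℚ) = 0 := by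
  rw [descPochhammer_eval_eq_descFactorial,
    Nat.descFactorial_eq_zero_iff_lt.mpr hm, Nat.cast_zero]

lemma sum_stirling_pow {N m : ℕ} (hm : m < N) :
    ∑ k ∈ range (N + 1), (stirlingFirst N k : ℚ) * ((m : ℚ)) ^ k = 0 := by
  simp only [stirlingFirst_cast]
  rw [← Polynomial.eval_eq_sum_range' (lt_of_le_of_lt (le_of_eq (descPochhammer_natDegree (R := ℚ) N))
    (Nat.lt_succ_self N))]
  exact descPochhammer_rat_eval_nat_zero hm

/-- The vanishing of the coefficient of the word `P_{2l}P_{2J}` (for `l ≠ j`) in the proof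
of Theorem 2 of the paper:
`∑_{a,b ≥ 1, a+b ≤ N} s(N, a+b) (N-l)^{a-1} (N-j)^b = 0` for `1 ≤ l, j ≤ N-1`, `l ≠ j`. -/
theorem stirling_pair_sum_vanish (N l j : ℕ) (hN : 2 ≤ N)
    (hl1 : 1 ≤ l) (hl2 : l ≤ N - 1) (hj1 : 1 ≤ j) (hj2 : j ≤ N - 1) (hlj : l ≠ j) :
    ∑ p ∈ pairIdx N,
        (stirlingFirst N (p.1 + p.2) : ℚ) * ((N - l : ℕ) : ℚ) ^ (p.1 - 1)
          * ((N - j : ℕ) : ℚ) ^ p.2 = 0 := by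
  set x : ℚ := ((N - l : ℕ) : ℚ) with hxdef
  set y : ℚ := ((N - j : ℕ) : ℚ) with hydef
  have hx0 : x ≠ 0 := by
    simp only [hxdef, ne_eq, Nat.cast_eq_zero]; omega
  have hxy : x - y ≠ 0 := by
    simp only [hxdef, hydef, ne_eq, sub_eq_zero, Nat.cast_inj]; omega
  have hs0 : (stirlingFirst N 0 : ℚ) = 0 := by
    rw [stirlingFirst_zero_eq N (by omega)]; norm_num
  -- Step 1: reindex the sum over pairs as a sum over a sigma type.
  have hre : ∑ p ∈ pairIdx N,
      (stirlingFirst N (p.1 + p.2) : ℚ) * x ^ (p.1 - 1) * y ^ p.2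
      = ∑ q ∈ (range (N + 1)).sigma (fun k => range (k - 1)),
          (stirlingFirst N q.1 : ℚ) * (x ^ q.2 * y ^ (q.1 - 1 - 1 - q.2)) * y := by
    apply Finset.sum_nbij' (i := fun p => (⟨p.1 + p.2, p.1 - 1⟩ : Σ _ : ℕ, ℕ))
      (j := fun q => (q.2 + 1, q.1 - 1 - q.2))
    · intro p hp
      simp only [pairIdx, mem_filter, mem_product, mem_Icc] at hp
      simp only [mem_sigma, mem_range]
      omega
    · intro q hq
      simp only [mem_sigma, mem_range] at hq
      simp only [pairIdx, mem_filter, mem_product, mem_Icc]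
      omega
    · intro p hp
      simp only [pairIdx, mem_filter, mem_product, mem_Icc] at hp
      ext <;> simp <;> omega
    · intro q hq
      simp only [mem_sigma, mem_range] at hq
      ext <;> simp <;> omega
    · intro p hp
      simp only [pairIdx, mem_filter, mem_product, mem_Icc] at hp
      obtain ⟨a, b⟩ := p
      simp only at hp ⊢
      obtain ⟨c, rfl⟩ : ∃ c, b = c + 1 := ⟨b - 1, by omega⟩
      have h1 : a + (c + 1) - 1 - 1 - (a - 1) = c := by omega
      rw [h1, pow_succ]
      ring
  rw [hre, Finset.sum_sigma]
  -- Step 2: multiply by (x - y) and use the geometric sum identity.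
  have key : (∑ k ∈ range (N + 1), ∑ i ∈ range (k - 1),
      (stirlingFirst N k : ℚ) * (x ^ i * y ^ (k - 1 - 1 - i)) * y) * (x - y) = 0 := by
    rw [Finset.sum_mul]
    have hterm : ∀ k ∈ range (N + 1),
        (∑ i ∈ range (k - 1),
          (stirlingFirst N k : ℚ) * (x ^ i * y ^ (k - 1 - 1 - i)) * y) * (x - y)
        = (stirlingFirst N k : ℚ) * (x ^ (k - 1) - y ^ (k - 1)) * y := by
      intro k _
      have : (∑ i ∈ range (k - 1),
          (stirlingFirst N k : ℚ) * (x ^ i * y ^ (k - 1 - 1 - i)) * y) * (x - y)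
          = (stirlingFirst N k : ℚ) *
            ((∑ i ∈ range (k - 1), x ^ i * y ^ (k - 1 - 1 - i)) * (x - y)) * y := by
        simp only [Finset.sum_mul, Finset.mul_sum]
        exact Finset.sum_congr rfl fun i _ => by ring
      rw [this, geom_sum₂_mul]
    rw [Finset.sum_congr rfl hterm]
    have split : ∑ k ∈ range (N + 1),
        (stirlingFirst N k : ℚ) * (x ^ (k - 1) - y ^ (k - 1)) * y
        = (∑ k ∈ range (N + 1), (stirlingFirst N k : ℚ) * x ^ (k - 1)) * y
          - ∑ k ∈ range (N + 1), (stirlingFirst N k : ℚ) * y ^ (k - 1) * y := by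
      rw [Finset.sum_mul, ← Finset.sum_sub_distrib]
      apply Finset.sum_congr rfl
      intro k _
      ring
    rw [split]
    have hA : (∑ k ∈ range (N + 1), (stirlingFirst N k : ℚ) * x ^ (k - 1)) = 0 := by
      have hmul : (∑ k ∈ range (N + 1), (stirlingFirst N k : ℚ) * x ^ (k - 1)) * x
          = ∑ k ∈ range (N + 1), (stirlingFirst N k : ℚ) * x ^ k := by
        rw [Finset.sum_mul]
        apply Finset.sum_congr rfl
        intro k _
        rcases Nat.eq_zero_or_pos k with hk | hk
        · subst hk; rw [hs0]; ring
        · have : k - 1 + 1 = k := by omega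
          rw [mul_assoc, ← pow_succ, this]
      have := sum_stirling_pow (N := N) (m := N - l) (by omega)
      rw [← hxdef] at this
      rw [this] at hmul
      exact (mul_eq_zero.mp hmul).resolve_right hx0
    have hB : (∑ k ∈ range (N + 1), (stirlingFirst N k : ℚ) * y ^ (k - 1) * y) = 0 := by
      have hmul : (∑ k ∈ range (N + 1), (stirlingFirst N k : ℚ) * y ^ (k - 1) * y)
          = ∑ k ∈ range (N + 1), (stirlingFirst N k : ℚ) * y ^ k := by
        apply Finset.sum_congr rfl
        intro k _
        rcases Nat.eq_zero_or_pos k with hk | hk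
        · subst hk; rw [hs0]; ring
        · have : k - 1 + 1 = k := by omega
          rw [mul_assoc, ← pow_succ, this]
      rw [hmul]
      have := sum_stirling_pow (N := N) (m := N - j) (by omega)
      rw [← hydef] at this
      exact this
    rw [hA, hB]
    ring
  exact (mul_eq_zero.mp key).resolve_right hxy
end

section
/- Let j, r ≥ 1 be integers and let K be a (possibly empty) composition; set N := j + r + |K|. Then the multiplicities satisfy m_{(j,r)⌢K} = −(1/(j+r)) · (binom(N,j))² · (j(N−j)/N) · m_{(r)⌢K}, where (j,r)⌢K and (r)⌢K denote the compositions of N and of N−j obtained by prepending (j,r), respectively (r), to K. -/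
open Finset

/-- The multiplicity `m_I ∈ ℚ` of a composition `I = (I_1, …, I_r)` of `N = I_1 + ⋯ + I_r`:
`m_I = -(-1)^r · N! · (N-1)! · ∏_{t=1}^r 1/(I_t!(I_t-1)!) · ∏_{t=1}^{r-1} 1/(I_t+I_{t+1})`. -/
noncomputable def mult (I : List ℕ) : ℚ :=
  -(-1 : ℚ) ^ I.length * (Nat.factorial I.sum : ℚ) * (Nat.factorial (I.sum - 1) : ℚ)
    * (I.map fun a => ((Nat.factorial a : ℚ) * (Nat.factorial (a - 1) : ℚ))⁻¹).prod
    * ((I.zip I.tail).map fun p => ((p.1 + p.2 : ℕ) : ℚ)⁻¹).prod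

/-! Prepending `j` to the composition `(r)⌢K` flips the sign, replaces `M!(M-1)!` by `N!(N-1)!`
(where `M = N - j`), and contributes the new factors `1/(j!(j-1)!)` and `1/(j+r)`. The resulting
factorial quotient `N!(N-1)!/(j!(j-1)! M!(M-1)!)` equals `binom(N,j)² · jM/N`, since
`(N-1)!/((j-1)!(M-1)!) = binom(N,j) · jM/N`. -/

open scoped Nat

theorem mult_cons_cons (a b : ℕ) (L : List ℕ) :
    mult (a :: b :: L) =
      -(((a + (b + L.sum))! * (a + (b + L.sum) - 1)! : ℚ)
        / ((a ! * (a - 1)! : ℚ) * ((b + L.sum)! * (b + L.sum - 1)! : ℚ)))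
        / ((a + b : ℕ) : ℚ) * mult (b :: L) := by
  simp only [mult, List.sum_cons, List.length_cons, List.map_cons, List.prod_cons,
    List.tail_cons, List.zip_cons_cons, pow_succ]
  field_simp

theorem choose_sq_mul_eq_factorial_div {a m : ℕ} (ha : a ≠ 0) (hm : m ≠ 0) :
    ((a + m).choose a : ℚ) ^ 2 * (a * m / (a + m : ℕ)) =
      ((a + m)! * (a + m - 1)! : ℚ) / ((a ! * (a - 1)! : ℚ) * (m ! * (m - 1)! : ℚ)) := by
  have hpred : ∀ n : ℕ, n ≠ 0 → ((n - 1)! : ℚ) = n ! / n := fun n hn => by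
    rw [eq_div_iff (by exact_mod_cast hn), ← Nat.mul_factorial_pred hn]
    push_cast
    ring
  rw [Nat.cast_choose ℚ (Nat.le_add_right a m), Nat.add_sub_cancel_left, hpred a ha, hpred m hm,
    hpred (a + m) (by omega)]
  field_simp

theorem mult_cons_ratio_general (j r : ℕ) (K : List ℕ) (hj : 1 ≤ j) (hr : 1 ≤ r) :
    mult (j :: r :: K) =
      -(1 / ((j : ℚ) + (r : ℚ))) * ((Nat.choose (j + r + K.sum) j : ℚ)) ^ 2
        * ((j : ℚ) * ((r + K.sum : ℕ) : ℚ) / ((j + r + K.sum : ℕ) : ℚ))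
        * mult (r :: K) := by
  rw [mult_cons_cons, add_assoc j r K.sum,
    ← choose_sq_mul_eq_factorial_div (a := j) (m := r + K.sum) (by omega) (by omega)]
  push_cast
  ring

/-- The quotient identity for multiplicities used in the proof of Theorem 2 of the paper:
with `N = j + r + |K|`,
`m_{(j,r)⌢K} = -(1/(j+r)) · binom(N,j)² · (j(N-j)/N) · m_{(r)⌢K}`. -/
theorem mult_cons_ratio (j r : ℕ) (K : List ℕ) (hj : 1 ≤ j) (hr : 1 ≤ r)
    (hK : ∀ a ∈ K, 1 ≤ a) :
    mult (j :: r :: K) =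
      -(1 / ((j : ℚ) + (r : ℚ))) * ((Nat.choose (j + r + K.sum) j : ℚ)) ^ 2
        * ((j : ℚ) * ((r + K.sum : ℕ) : ℚ) / ((j + r + K.sum : ℕ) : ℚ))
        * mult (r :: K) :=
  mult_cons_ratio_general j r K hj hr
end

section
/- (Closed formula for π, Remark 2.4 of the paper.) For every integer N ≥ 1 and every rational number μ, the identity (N−1)! · π_N(μ) = ∑_{I composition of N} m_I · q_{N, I_1}(μ) · X_I holds in F, where I_1 denotes the leftmost entry of the composition I, and for 1 ≤ a ≤ N, q_{N,a} ∈ ℚ[X] is the unique polynomial with (X − (N−a)) · q_{N,a}(X) = X(X−1)⋯(X−N+1) (this quotient is exact since N−a ∈ {0,…,N−1} is a root of the descending factorial). -/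
/-!
Let `a` be the first entry of a composition `I` of `N` and `r = N - a`. Synthetic division of
`X(X-1)⋯(X-N+1)` by `X - r` shows that the coefficient of `X^{N-k}` in the quotient `q_{N,a}` is
the Horner sum `∑_{i<k} s(N,N-i) r^{k-1-i}`, so `m_I^{(k)} = (N-k)!/(N-1)! · m_I · [X^{N-k}] q_{N,a}`
for `k < N`. The same formula holds for `k = N`: the constant term of `q_{N,a}` vanishes when the
root `r` is nonzero, i.e. `I ≠ (N)`, and equals `s(N,1) = (-1)^{N-1}(N-1)!` when `r = 0`.
Hence the coefficient of `X_I` in `(N-1)! · π_N(μ)` is `m_I · ∑_k [X^{N-k}] q_{N,a} · μ^{N-k}`,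
which is `m_I · q_{N,a}(μ)`.
-/

open Finset

/-- The higher multiplicities `m_I^{(k)}`: `m_I^{(1)} = m_I`, and for a composition `I`
of `N` with first entry `a` and `2 ≤ k ≤ N-1`,
`m_I^{(k)} = (∑_{i=0}^{k-1} s(N, N-i)·(N-a)^{k-1-i}) · (N-k)!/(N-1)! · m_I`
(with the convention `0^0 = 1`). -/
noncomputable def multK (k : ℕ) (I : List ℕ) : ℚ :=
  if k = 1 then mult I
  else
    (∑ i ∈ Finset.range k,
        (stirlingFirst I.sum (I.sum - i) : ℚ) * ((I.sum - I.headI : ℕ) : ℚ) ^ (k - 1 - i))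
      * (Nat.factorial (I.sum - k) : ℚ) / (Nat.factorial (I.sum - 1) : ℚ) * mult I

/-- The free associative `ℚ`-algebra on generators `X_1, X_2, X_3, …`. -/
abbrev F : Type := FreeAlgebra ℚ ℕ

/-- The noncommutative monomial `X_I = X_{I_1} ⋯ X_{I_r}` attached to a composition. -/
noncomputable def XI (I : List ℕ) : F := (I.map (FreeAlgebra.ι ℚ)).prod

/-- The operator `C_N^{(k)} = ∑_{|I|=N} m_I^{(k)} X_I` for `1 ≤ k ≤ N-1`, and
`C_N^{(N)} = (-1)^{N-1} X_N`. -/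
noncomputable def CN (N k : ℕ) : F :=
  if k = N then ((-1 : ℚ) ^ (N - 1)) • FreeAlgebra.ι ℚ N
  else ∑ I : Composition N, multK k I.blocks • XI I.blocks

/-- The polynomial `π_N(μ) = ∑_{k=1}^N (μ^{N-k}/(N-k)!) C_N^{(k)}`. -/
noncomputable def piN (N : ℕ) (μ : ℚ) : F :=
  ∑ k ∈ Finset.Icc 1 N, (μ ^ (N - k) / (Nat.factorial (N - k) : ℚ)) • CN N k

namespace Polynomial

variable {R : Type*}

theorem coeff_divByMonic_X_sub_C_natDegree_sub [Ring R] {p : R[X]} {n k : ℕ}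
    (hp : p.natDegree = n) (hk : k ≤ n) (r : R) :
    (p /ₘ (X - C r)).coeff (n - k) = ∑ i ∈ range k, r ^ (k - 1 - i) * p.coeff (n - i) := by
  rw [coeff_divByMonic_X_sub_C, hp]
  refine sum_nbij' (n - ·) (n - ·) (fun i hi => ?_) (fun i hi => ?_) (fun i hi => ?_)
    (fun i hi => ?_) (fun i hi => ?_) <;> simp only [mem_Icc, mem_range] at hi ⊢
  any_goals omega
  rw [Nat.sub_sub_self hi.2]
  congr 2
  omega

theorem eval_eq_sum_Icc_coeff_sub [Semiring R] {p : R[X]} {n : ℕ} (hp : p.natDegree < n)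
    (x : R) : p.eval x = ∑ k ∈ Icc 1 n, p.coeff (n - k) * x ^ (n - k) := by
  rw [eval_eq_sum_range' hp]
  refine sum_nbij' (n - ·) (n - ·) (fun i hi => ?_) (fun i hi => ?_) (fun i hi => ?_)
    (fun i hi => ?_) (fun i hi => ?_) <;> simp only [mem_Icc, mem_range] at hi ⊢
  any_goals omega
  rw [Nat.sub_sub_self hi.le]

theorem coeff_one_descPochhammer_succ [CommRing R] (n : ℕ) :
    (descPochhammer R (n + 1)).coeff 1 = (-1) ^ n * n.factorial := by
  induction n with
  | zero => simp
  | succ n ih =>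
    rw [descPochhammer_succ_right, ← C_eq_natCast, coeff_mul_X_sub_C, ih,
      coeff_zero_eq_eval_zero, descPochhammer_ne_zero_eval_zero (R := R) n.succ_ne_zero]
    push_cast [Nat.factorial_succ]
    ring

end Polynomial

open Polynomial

theorem cast_stirlingFirst (N m : ℕ) :
    (stirlingFirst N m : ℚ) = (descPochhammer ℚ N).coeff m := by
  rw [stirlingFirst, ← descPochhammer_map (Int.castRingHom ℚ), coeff_map, eq_intCast]

/-- The polynomial `q_{N,a}` of the paper. -/
noncomputable def descPochhammerQuot (N a : ℕ) : ℚ[X] :=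
  descPochhammer ℚ N /ₘ (X - C ((N - a : ℕ) : ℚ))

theorem eq_descPochhammerQuot {N a : ℕ} {q : ℚ[X]}
    (hq : (X - C ((N - a : ℕ) : ℚ)) * q = descPochhammer ℚ N) :
    q = descPochhammerQuot N a := by
  rw [descPochhammerQuot, ← hq, mul_divByMonic_cancel_left q (monic_X_sub_C _)]

theorem natDegree_descPochhammerQuot_lt {N : ℕ} (hN : 1 ≤ N) (a : ℕ) :
    (descPochhammerQuot N a).natDegree < N := by
  rw [descPochhammerQuot, natDegree_divByMonic _ (monic_X_sub_C _), descPochhammer_natDegree,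
    natDegree_X_sub_C]
  omega

theorem coeff_descPochhammerQuot {N k : ℕ} (a : ℕ) (hk : k ≤ N) :
    (descPochhammerQuot N a).coeff (N - k)
      = ∑ i ∈ range k, (stirlingFirst N (N - i) : ℚ) * ((N - a : ℕ) : ℚ) ^ (k - 1 - i) := by
  rw [descPochhammerQuot, coeff_divByMonic_X_sub_C_natDegree_sub (descPochhammer_natDegree ℚ N) hk]
  exact sum_congr rfl fun i _ => by rw [cast_stirlingFirst, mul_comm]

theorem coeff_zero_descPochhammerQuot_of_lt {N a : ℕ} (ha : 1 ≤ a) (haN : a < N) :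
    (descPochhammerQuot N a).coeff 0 = 0 := by
  have hroot : (descPochhammer ℚ N).IsRoot ((N - a : ℕ) : ℚ) :=
    descPochhammer_eval_coe_nat_of_lt (by omega)
  have h := congrArg (eval 0) (mul_divByMonic_eq_iff_isRoot.mpr hroot)
  rw [eval_mul, descPochhammer_ne_zero_eval_zero (R := ℚ) (by omega)] at h
  simp only [eval_sub, eval_X, eval_C, zero_sub, neg_mul, neg_eq_zero, mul_eq_zero,
    Nat.cast_eq_zero] at h
  rw [descPochhammerQuot, coeff_zero_eq_eval_zero]
  exact h.resolve_left (by omega)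

theorem coeff_zero_descPochhammerQuot_self (n : ℕ) :
    (descPochhammerQuot (n + 1) (n + 1)).coeff 0 = (-1) ^ n * n.factorial := by
  rw [descPochhammerQuot, coeff_divByMonic_X_sub_C_rec, coeff_one_descPochhammer_succ]
  simp

theorem multK_eq_coeff_descPochhammerQuot (I : List ℕ) {k : ℕ} (hk : k ≤ I.sum) :
    multK k I = (descPochhammerQuot I.sum I.headI).coeff (I.sum - k)
      * (I.sum - k).factorial / (I.sum - 1).factorial * mult I := by
  rw [coeff_descPochhammerQuot _ hk, multK]
  split_ifs with hk1
  · subst hk1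
    have : ((I.sum - 1).factorial : ℚ) ≠ 0 := by positivity
    have hlead := (monic_descPochhammer ℤ I.sum).coeff_natDegree
    rw [descPochhammer_natDegree] at hlead
    simp [stirlingFirst, hlead, this]
  · rfl

theorem mult_singleton (a : ℕ) : mult [a] = 1 := by
  have : (a.factorial : ℚ) * (a - 1).factorial ≠ 0 := by positivity
  simpa [mult, mul_assoc] using mul_inv_cancel₀ this

namespace Composition

variable {n : ℕ}

theorem headI_mem_blocks (hn : 0 < n) (c : Composition n) : c.blocks.headI ∈ c.blocks := by
  rcases h : c.blocks with _ | ⟨a, t⟩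
  · have := c.blocks_sum
    simp only [h, List.sum_nil] at this
    omega
  · exact List.mem_cons_self

theorem headI_lt_of_ne_single {hn : 0 < n} {c : Composition n} (hc : c ≠ single n hn) :
    c.blocks.headI < n := by
  rw [ne_single_iff] at hc
  have h0 : 0 < c.length := c.length_pos_iff.2 hn
  have := hc ⟨0, h0⟩
  rcases h : c.blocks with _ | ⟨a, t⟩
  · exact hn
  · simpa [blocksFun, h] using this

end Composition

theorem CN_eq_sum_coeff_descPochhammerQuot {N k : ℕ} (hN : 1 ≤ N) (hk : k ≤ N) :
    CN N k = ∑ I : Composition N, ((descPochhammerQuot N I.blocks.headI).coeff (N - k)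
      * (N - k).factorial / (N - 1).factorial * mult I.blocks) • XI I.blocks := by
  rcases hk.eq_or_lt with rfl | hkN
  · rw [CN, if_pos rfl, Finset.sum_eq_single (Composition.single k hN)]
    · obtain ⟨n, rfl⟩ : ∃ n, k = n + 1 := ⟨k - 1, by omega⟩
      have : (n.factorial : ℚ) ≠ 0 := by positivity
      simp [Composition.single_blocks, coeff_zero_descPochhammerQuot_self, mult_singleton, XI, this]
    · intro I _ hI
      have := I.one_le_blocks (I.headI_mem_blocks hN)
      rw [Nat.sub_self, coeff_zero_descPochhammerQuot_of_lt this
        (Composition.headI_lt_of_ne_single hI)]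
      simp only [zero_mul, zero_div, zero_smul]
    · exact fun h => absurd (mem_univ _) h
  · rw [CN, if_neg hkN.ne]
    refine sum_congr rfl fun I _ => ?_
    rw [multK_eq_coeff_descPochhammerQuot _ (hk.trans_eq I.blocks_sum.symm), I.blocks_sum]

theorem piN_eq_sum_eval_descPochhammerQuot {N : ℕ} (hN : 1 ≤ N) (μ : ℚ) :
    piN N μ = ∑ I : Composition N,
      (mult I.blocks * (descPochhammerQuot N I.blocks.headI).eval μ / (N - 1).factorial)
        • XI I.blocks := by
  rw [piN, sum_congr rfl fun k hk => by rw [CN_eq_sum_coeff_descPochhammerQuot hN (mem_Icc.1 hk).2]]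
  simp only [smul_sum, smul_smul]
  rw [sum_comm]
  refine sum_congr rfl fun I _ => ?_
  rw [← sum_smul, eval_eq_sum_Icc_coeff_sub (natDegree_descPochhammerQuot_lt hN _), mul_sum,
    sum_div]
  congr 1
  refine sum_congr rfl fun k _ => ?_
  field_simp

/-- Remark 2.4 of the paper (closed formula for `π_N`): if for each `1 ≤ a ≤ N`,
`q a` is the (unique) polynomial with `(X - (N-a))·(q a) = X(X-1)⋯(X-N+1)`, then
`(N-1)! · π_N(μ) = ∑_{|I|=N} m_I · (q I_1)(μ) · X_I`, where `I_1` is the leftmost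
entry of the composition `I`. -/
theorem piN_closed_formula (N : ℕ) (hN : 1 ≤ N) (q : ℕ → Polynomial ℚ)
    (hq : ∀ a : ℕ, 1 ≤ a → a ≤ N →
      (Polynomial.X - Polynomial.C ((N - a : ℕ) : ℚ)) * q a = descPochhammer ℚ N)
    (μ : ℚ) :
    (Nat.factorial (N - 1) : ℚ) • piN N μ
      = ∑ I : Composition N,
          (mult I.blocks * (q I.blocks.headI).eval μ) • XI I.blocks := by
  rw [piN_eq_sum_eval_descPochhammerQuot hN, smul_sum]
  refine sum_congr rfl fun I _ => ?_
  have hmem := I.headI_mem_blocks hN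
  rw [smul_smul, eq_descPochhammerQuot (hq _ (I.one_le_blocks hmem) (I.blocks_le hmem))]
  field_simp
end

section
/- For every integer N ≥ 2, the sum of the multiplicities over all compositions of N vanishes: ∑_{I composition of N} m_I = 0. (Moreover m_{(N)} = 1 for all N ≥ 1.) -/
/-!
Write `m_I = N! (N-1)! · w(I)` with `w = reducedMult`. Splitting off the first block `k + 1`, the
sums `S(m, k) = ∑_{|J| = m} w(k + 1, J)` satisfy
`S(m + 1, k) = -1/((k+1)! k!) · ∑_{i+j=m} S(i, j) / (j + k + 2)`, and the identity
`∑_{i+j=n} (-1)^i / (i! j! (j+k+1)) = (-1)^n k! / (n+k+1)!` turns this into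
`S(m, k) = (-1)^m / (m! k! (m+k+1)!)`. Summing over the first block of a composition of `N = n + 2`
then leaves `∑_{i+j=n+1} (-1)^i / (i! j!) = (1 - 1)^(n+1) / (n+1)! = 0`.
-/

open Finset

open Nat

section Antidiagonal

variable {K : Type*} [Field K] [CharZero K]

theorem Finset.Nat.succ_mul_sum_antidiagonal_div_factorial (f : ℕ → ℕ → K) (n : ℕ) :
    (n + 1 : K) * ∑ p ∈ antidiagonal (n + 1), f p.1 p.2 / (p.1 ! * p.2 !) =
      ∑ p ∈ antidiagonal n, (f (p.1 + 1) p.2 + f p.1 (p.2 + 1)) / (p.1 ! * p.2 !) := by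
  have split : ∀ p ∈ antidiagonal (n + 1), (n + 1 : K) * (f p.1 p.2 / (p.1 ! * p.2 !)) =
      p.1 * f p.1 p.2 / (p.1 ! * p.2 !) + p.2 * f p.1 p.2 / (p.1 ! * p.2 !) := by
    intro p hp
    rw [← add_div, ← add_mul, ← mul_div_assoc]
    exact_mod_cast congrArg (fun m : ℕ => (m : K) * f p.1 p.2 / (p.1 ! * p.2 !))
      (mem_antidiagonal.1 hp).symm
  rw [mul_sum, sum_congr rfl split, sum_add_distrib, Nat.sum_antidiagonal_succ,
    Nat.sum_antidiagonal_succ']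
  simp only [Nat.cast_zero, zero_mul, zero_div, zero_add, add_div, ← sum_add_distrib]
  refine sum_congr rfl fun p _ => ?_
  simp only [Nat.factorial_succ, Nat.cast_mul]
  field_simp

theorem Finset.Nat.sum_antidiagonal_succ_neg_one_pow_div_factorial (n : ℕ) :
    ∑ p ∈ antidiagonal (n + 1), (-1 : K) ^ p.1 / (p.1 ! * p.2 !) = 0 := by
  have h := Nat.succ_mul_sum_antidiagonal_div_factorial (fun i _ => (-1 : K) ^ i) n
  simp only [pow_succ, mul_neg_one, neg_add_cancel, zero_div, sum_const_zero] at h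
  exact (mul_eq_zero.1 h).resolve_left (by exact_mod_cast n.succ_ne_zero)

theorem Finset.Nat.sum_antidiagonal_neg_one_pow_div_factorial_div (n k : ℕ) :
    ∑ p ∈ antidiagonal n, (-1 : K) ^ p.1 / (p.2 + k + 1) / (p.1 ! * p.2 !) =
      (-1) ^ n * k ! / (n + k + 1)! := by
  induction n generalizing k with
  | zero =>
    have hk : (k ! : K) ≠ 0 := Nat.cast_ne_zero.2 k.factorial_ne_zero
    rw [Nat.antidiagonal_zero, sum_singleton, Nat.zero_add, Nat.factorial_succ]
    push_cast
    field_simp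
    simp
  | succ n ih =>
    have pascal :=
      Nat.succ_mul_sum_antidiagonal_div_factorial (fun i j => (-1 : K) ^ i / (j + k + 1)) n
    have shift : ∑ p ∈ antidiagonal n, ((-1 : K) ^ (p.1 + 1) / (p.2 + k + 1) +
        (-1) ^ p.1 / ((p.2 + 1 : ℕ) + k + 1)) / (p.1 ! * p.2 !) =
        -((-1) ^ n * k ! / (n + k + 1)!) + (-1) ^ n * (k + 1)! / (n + (k + 1) + 1)! := by
      rw [← ih, ← ih, ← sum_neg_distrib, ← sum_add_distrib]
      refine sum_congr rfl fun p _ => ?_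
      push_cast
      ring
    rw [shift] at pascal
    rw [eq_div_of_mul_eq (Nat.cast_add_one_ne_zero n) ((mul_comm _ _).trans pascal),
      show n + (k + 1) + 1 = n + k + 1 + 1 by omega, show n + 1 + k + 1 = n + k + 1 + 1 by omega,
      Nat.factorial_succ (n + k + 1), Nat.factorial_succ k]
    have hk : (k ! : K) ≠ 0 := Nat.cast_ne_zero.2 k.factorial_ne_zero
    have hnk : ((n + k + 1)! : K) ≠ 0 := Nat.cast_ne_zero.2 (n + k + 1).factorial_ne_zero
    have hsucc : (n + k + 1 + 1 : K) ≠ 0 := by exact_mod_cast (n + k + 1).succ_ne_zero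
    push_cast
    field_simp
    ring

end Antidiagonal

namespace Composition

def blocksFinset (n : ℕ) : Finset (List ℕ) :=
  (univ : Finset (Composition n)).map ⟨blocks, fun _ _ => Composition.ext⟩

theorem mem_blocksFinset {n : ℕ} {l : List ℕ} :
    l ∈ blocksFinset n ↔ (∀ x ∈ l, 0 < x) ∧ l.sum = n := by
  simp only [blocksFinset, mem_map, mem_univ, true_and]
  exact ⟨fun ⟨c, hc⟩ => hc ▸ ⟨fun _ => c.blocks_pos, c.blocks_sum⟩,
    fun ⟨hpos, hsum⟩ => ⟨⟨l, hpos _, hsum⟩, rfl⟩⟩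

theorem sum_blocksFinset {M : Type*} [AddCommMonoid M] (f : List ℕ → M) (n : ℕ) :
    ∑ l ∈ blocksFinset n, f l = ∑ c : Composition n, f c.blocks :=
  sum_map _ _ _

theorem blocksFinset_zero : blocksFinset 0 = {[]} := by
  ext l
  simp only [mem_blocksFinset, mem_singleton, List.sum_eq_zero_iff]
  refine ⟨fun ⟨hpos, hzero⟩ => ?_, by rintro rfl; simp⟩
  exact List.eq_nil_iff_forall_not_mem.2 fun x hx => (hpos x hx).ne' (hzero x hx)

theorem sum_blocksFinset_succ {M : Type*} [AddCommMonoid M] (f : List ℕ → M) (n : ℕ) :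
    ∑ l ∈ blocksFinset (n + 1), f l =
      ∑ p ∈ antidiagonal n, ∑ l ∈ blocksFinset p.1, f ((p.2 + 1) :: l) := by
  have cons_head_tail : ∀ l ∈ blocksFinset (n + 1), (l.headI - 1 + 1) :: l.tail = l := by
    rintro (_ | ⟨a, l⟩) hl
    · simp [mem_blocksFinset] at hl
    · rw [List.headI_cons, List.tail_cons,
        Nat.sub_add_cancel ((mem_blocksFinset.1 hl).1 a List.mem_cons_self)]
  rw [sum_sigma']
  refine sum_nbij' (fun l => ⟨(l.tail.sum, l.headI - 1), l.tail⟩) (fun q => (q.1.2 + 1) :: q.2)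
    ?_ ?_ cons_head_tail ?_ fun l hl => congrArg f (cons_head_tail l hl).symm
  all_goals simp only [mem_blocksFinset, mem_sigma, HasAntidiagonal.mem_antidiagonal]
  · rintro (_ | ⟨a, l⟩) ⟨hpos, hsum⟩
    · simp at hsum
    · simp only [List.mem_cons, List.sum_cons] at hpos hsum
      have ha := hpos a (.inl rfl)
      exact ⟨by simp only [List.headI_cons, List.tail_cons]; omega, fun x hx => hpos x (.inr hx),
        trivial⟩
  · rintro ⟨⟨i, j⟩, l⟩ ⟨hij, hpos, hsum⟩
    dsimp only at hij hpos hsum ⊢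
    simp only [List.mem_cons, List.sum_cons, hsum]
    exact ⟨by rintro x (rfl | hx) <;> simp_all, by omega⟩
  · rintro ⟨⟨i, j⟩, l⟩ ⟨_, _, hsum⟩
    simp [hsum]

end Composition

noncomputable def reducedMult (l : List ℕ) : ℚ :=
  -(-1 : ℚ) ^ l.length * (l.map fun a => ((a ! : ℚ) * (a - 1)!)⁻¹).prod
    * ((l.zip l.tail).map fun p => ((p.1 + p.2 : ℕ) : ℚ)⁻¹).prod

theorem mult_eq_factorial_mul_reducedMult (l : List ℕ) :
    mult l = l.sum ! * (l.sum - 1)! * reducedMult l := by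
  rw [mult, reducedMult]
  ring

theorem reducedMult_singleton (a : ℕ) : reducedMult [a] = ((a ! : ℚ) * (a - 1)!)⁻¹ := by
  simp [reducedMult]

theorem reducedMult_cons_cons (a b : ℕ) (l : List ℕ) :
    reducedMult (a :: b :: l) =
      -((a ! : ℚ) * (a - 1)!)⁻¹ * ((a + b : ℕ) : ℚ)⁻¹ * reducedMult (b :: l) := by
  simp only [reducedMult, List.length_cons, List.map_cons, List.prod_cons, List.tail_cons,
    List.zip_cons_cons, pow_succ]
  ring

open Composition in
theorem sum_reducedMult_cons (m k : ℕ) :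
    ∑ l ∈ blocksFinset m, reducedMult ((k + 1) :: l) =
      (-1) ^ m / (m ! * k ! * (m + k + 1)!) := by
  induction m using Nat.strong_induction_on generalizing k with
  | _ m ih =>
  rcases m with _ | n
  · rw [blocksFinset_zero, sum_singleton, reducedMult_singleton]
    simp only [Nat.add_sub_cancel, pow_zero, Nat.factorial_zero, zero_add]
    push_cast
    ring
  · have hterm : ∀ p ∈ antidiagonal n,
        ∑ l ∈ blocksFinset p.1, reducedMult ((k + 1) :: (p.2 + 1) :: l) =
          -((k + 1)! * k ! * (n + 1)! : ℚ)⁻¹ *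
            ((-1) ^ p.1 / (p.2 + ((k + 1 : ℕ) : ℚ) + 1) / (p.1 ! * p.2 !)) := by
      intro p hp
      simp only [reducedMult_cons_cons]
      have hsum := HasAntidiagonal.mem_antidiagonal.1 hp
      rw [← mul_sum, ih p.1 (by omega), show p.1 + p.2 + 1 = n + 1 by omega]
      push_cast
      field_simp
      ring
    rw [sum_blocksFinset_succ, sum_congr rfl hterm, ← mul_sum,
      Nat.sum_antidiagonal_neg_one_pow_div_factorial_div,
      show n + (k + 1) + 1 = n + 1 + k + 1 by omega]
    field_simp
    ring

open Composition in
theorem sum_reducedMult_eq_zero (n : ℕ) : ∑ l ∈ blocksFinset (n + 2), reducedMult l = 0 := by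
  have hterm : ∀ p ∈ antidiagonal (n + 1),
      ∑ l ∈ blocksFinset p.1, reducedMult ((p.2 + 1) :: l) =
        (-1) ^ p.1 / (p.1 ! * p.2 !) / (n + 2)! := by
    intro p hp
    rw [sum_reducedMult_cons, HasAntidiagonal.mem_antidiagonal.1 hp]
    ring
  rw [sum_blocksFinset_succ, sum_congr rfl hterm, ← sum_div,
    Nat.sum_antidiagonal_succ_neg_one_pow_div_factorial, zero_div]

/-- Lemma 2.1 of `[juhl-power]` cited in the paper: the multiplicities sum to zero,
`∑_{|I|=N} m_I = 0` for `N ≥ 2`; moreover `m_{(N)} = 1` for all `N ≥ 1`. -/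
theorem sum_mult_eq_zero :
    (∀ N : ℕ, 2 ≤ N → ∑ I : Composition N, mult I.blocks = 0)
      ∧ (∀ N : ℕ, 1 ≤ N → mult [N] = 1) := by
  refine ⟨fun N hN => ?_, fun N hN => ?_⟩
  · obtain ⟨n, rfl⟩ := Nat.exists_eq_add_of_le' hN
    have hterm : ∀ l ∈ Composition.blocksFinset (n + 2),
        mult l = (n + 2)! * (n + 1)! * reducedMult l := fun l hl => by
      rw [mult_eq_factorial_mul_reducedMult, (Composition.mem_blocksFinset.1 hl).2]
      rfl
    rw [← Composition.sum_blocksFinset, sum_congr rfl hterm,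
      ← mul_sum, sum_reducedMult_eq_zero, mul_zero]
  · obtain ⟨n, rfl⟩ := Nat.exists_eq_add_of_le' hN
    rw [mult_eq_factorial_mul_reducedMult, reducedMult_singleton, List.sum_singleton]
    exact mul_inv_cancel₀ (by positivity)
end
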